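/- arXiv:1407.4763 — 7 statements merged into one kernel-verified Lean document; each statement's English description precedes it below -/
import Mathlib

section
/- Let m ≥ 1 and 0 ≤ l, l' ≤ m be integers with l' ≠ l and l' ≠ m − l. Then there exists a constant C < 1 such that for every z, w ∈ ℂ with |z|² + |w|² = 1, writing (zζ+wω)^l·(−conj(w)ζ+conj(z)ω)^{m−l} = Σ_{p=0}^{m} a_p · ζ^p ω^{m−p} as a homogeneous polynomial in (ζ,ω), one has √(l'!·(m−l')!/(l!·(m−l)!)) · |a_{l'}| ≤ C. -/
/-
The numbers `a_p` are the matrix coefficients of `g = {z,w}` acting on `P_m` in the monomial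
basis `ζ^l ω^(m-l)`, and they are multiplicative in `g`. Comparing the explicit binomial formula
for `g` with the one for its transpose shows that the action of `gᴴ` is adjoint to that of `g`
for the inner product in which `ζ^p ω^(m-p)` has squared norm `p! (m-p)!`. As `g gᴴ = 1`, this
gives the Parseval identity `∑_p p! (m-p)! |a_p|² = l! (m-l)!`, so each normalized coefficient
is at most `1`. For `p = l'` it is strictly less than `1`: if `w = 0` or `z = 0` the matrix is
diagonal or antidiagonal, so `a_p = 0` unless `p = l` resp. `p = m - l`; otherwise one of the
end coefficients `a_0 = w^l z̄^(m-l)`, `a_m = z^l (-w̄)^(m-l)` is a second nonzero term.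
The bound is uniform because the unit sphere of `ℂ²` is compact.
-/

open Polynomial Finset
open scoped Nat Matrix ComplexConjugate

section CommSemiring

variable {R : Type*} [CommSemiring R]

lemma homogenize_C_mul_X_add_C (a b : R) :
    (C a * X + C b).homogenize 1 = .C a * .X 0 + .C b * .X 1 := by
  simp

lemma homogenize_pow {p : R[X]} {k : ℕ} (hp : p.natDegree ≤ k) (n : ℕ) :
    (p ^ n).homogenize (n * k) = p.homogenize k ^ n := by
  induction n with
  | zero => simp
  | succ n ih =>
    rw [pow_succ, Nat.succ_mul, homogenize_mul _ _ (natDegree_pow_le_of_le n hp) hp, ih, pow_succ]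

lemma aeval_homogenize {S : Type*} [CommSemiring S] [Algebra R S] (p : R[X]) (n : ℕ)
    (x : Fin 2 → S) :
    MvPolynomial.aeval x (p.homogenize n) =
      ∑ k ∈ range (n + 1), algebraMap R S (p.coeff k) * x 0 ^ k * x 1 ^ (n - k) := by
  rw [homogenize, map_sum, Nat.sum_antidiagonal_eq_sum_range_succ_mk]
  refine sum_congr rfl fun k _ => ?_
  simp [MvPolynomial.aeval_monomial, Finsupp.prod_fintype, Fin.prod_univ_two, mul_assoc]

lemma coeff_C_mul_X_add_C_pow (a b : R) (n k : ℕ) :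
    ((C a * X + C b) ^ n).coeff k = n.choose k * a ^ k * b ^ (n - k) := by
  have hterm : ∀ i, (C a * X) ^ i * C b ^ (n - i) * (n.choose i : R[X]) =
      C (n.choose i * a ^ i * b ^ (n - i)) * X ^ i := by
    intro i
    simp only [map_mul, map_pow, map_natCast]
    ring
  rw [add_pow, finsetSum_coeff]
  simp only [hterm, coeff_C_mul_X_pow, sum_ite_eq, mem_range]
  split_ifs with hk
  · rfl
  · simp [Nat.choose_eq_zero_of_lt (not_lt.1 hk)]

lemma factorial_mul_choose_mul_choose_comm {m l p j : ℕ} (hl : l ≤ m) (hp : p ≤ m) (hjl : j ≤ l)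
    (hjp : j ≤ p) :
    p ! * (m - p)! * (l.choose j * (m - l).choose (p - j)) =
      l ! * (m - l)! * (p.choose j * (m - p).choose (l - j)) := by
  rcases lt_or_ge (m - l) (p - j) with h | h
  · rw [Nat.choose_eq_zero_of_lt h, Nat.choose_eq_zero_of_lt (by omega : m - p < l - j)]
    simp
  · rw [← Nat.choose_mul_factorial_mul_factorial hjl, ← Nat.choose_mul_factorial_mul_factorial hjp,
      ← Nat.choose_mul_factorial_mul_factorial h,
      ← Nat.choose_mul_factorial_mul_factorial (by omega : l - j ≤ m - p),
      show m - l - (p - j) = m - p - (l - j) by omega]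
    ring

-- `(g₀₀ ζ + g₀₁ ω)^l (g₁₀ ζ + g₁₁ ω)^(m-l)` dehomogenized at `ω = 1`; its coefficients
-- `symPowCoeff m g l p` form the matrix of `g` acting on `P_m` in the monomial basis.
noncomputable def symPowPoly (m : ℕ) (g : Matrix (Fin 2) (Fin 2) R) (l : ℕ) : R[X] :=
  (C (g 0 0) * X + C (g 0 1)) ^ l * (C (g 1 0) * X + C (g 1 1)) ^ (m - l)

noncomputable def symPowCoeff (m : ℕ) (g : Matrix (Fin 2) (Fin 2) R) (l p : ℕ) : R :=
  (symPowPoly m g l).coeff p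

variable (m : ℕ) (g : Matrix (Fin 2) (Fin 2) R)

lemma homogenize_symPowPoly {l : ℕ} (hl : l ≤ m) :
    (symPowPoly m g l).homogenize m =
      (.C (g 0 0) * .X 0 + .C (g 0 1) * .X 1) ^ l *
        (.C (g 1 0) * .X 0 + .C (g 1 1) * .X 1) ^ (m - l) := by
  have hd : ∀ a b : R, (C a * X + C b).natDegree ≤ 1 := fun _ _ => natDegree_linear_le
  have key := homogenize_mul _ _ (natDegree_pow_le_of_le l (hd (g 0 0) (g 0 1)))
    (natDegree_pow_le_of_le (m - l) (hd (g 1 0) (g 1 1)))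
  rw [homogenize_pow (hd _ _), homogenize_pow (hd _ _), homogenize_C_mul_X_add_C,
    homogenize_C_mul_X_add_C, show l * 1 + (m - l) * 1 = m by omega] at key
  exact key

lemma sum_symPowCoeff_mul_pow {S : Type*} [CommSemiring S] [Algebra R S] {l : ℕ} (hl : l ≤ m)
    (u v : S) :
    ∑ p ∈ range (m + 1), algebraMap R S (symPowCoeff m g l p) * u ^ p * v ^ (m - p) =
      (algebraMap R S (g 0 0) * u + algebraMap R S (g 0 1) * v) ^ l *
        (algebraMap R S (g 1 0) * u + algebraMap R S (g 1 1) * v) ^ (m - l) := by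
  have := congrArg (MvPolynomial.aeval ![u, v]) (homogenize_symPowPoly m g hl)
  rw [aeval_homogenize] at this
  simpa [symPowCoeff, MvPolynomial.aeval_C] using this

lemma symPowCoeff_mul (h : Matrix (Fin 2) (Fin 2) R) {l : ℕ} (hl : l ≤ m) (p : ℕ) :
    symPowCoeff m (g * h) l p =
      ∑ q ∈ range (m + 1), symPowCoeff m g l q * symPowCoeff m h q p := by
  have hrow : ∀ i, C (g i 0) * (C (h 0 0) * X + C (h 0 1)) + C (g i 1) * (C (h 1 0) * X + C (h 1 1))
      = C ((g * h) i 0) * X + C ((g * h) i 1) := by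
    intro i
    simp only [Matrix.mul_apply, Fin.sum_univ_two, map_add, map_mul]
    ring
  have hexp := sum_symPowCoeff_mul_pow m g hl (C (h 0 0) * X + C (h 0 1))
    (C (h 1 0) * X + C (h 1 1))
  simp only [algebraMap_eq, hrow, mul_assoc] at hexp
  rw [symPowCoeff, symPowPoly, ← hexp, finsetSum_coeff]
  simp only [coeff_C_mul]
  rfl

lemma symPowCoeff_of_offDiag_eq_zero (h01 : g 0 1 = 0) (h10 : g 1 0 = 0) (l p : ℕ) :
    symPowCoeff m g l p = if p = l then g 0 0 ^ l * g 1 1 ^ (m - l) else 0 := by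
  rw [symPowCoeff, symPowPoly, h01, h10]
  simp only [map_zero, add_zero, zero_mul, zero_add, mul_pow, ← C_pow]
  rw [mul_right_comm, ← C_mul, coeff_C_mul_X_pow]

lemma symPowCoeff_of_diag_eq_zero (h00 : g 0 0 = 0) (h11 : g 1 1 = 0) (l p : ℕ) :
    symPowCoeff m g l p = if p = m - l then g 0 1 ^ l * g 1 0 ^ (m - l) else 0 := by
  rw [symPowCoeff, symPowPoly, h00, h11]
  simp only [map_zero, add_zero, zero_mul, zero_add, mul_pow, ← C_pow]
  rw [← mul_assoc, ← C_mul, coeff_C_mul_X_pow]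

lemma symPowCoeff_one (l p : ℕ) : symPowCoeff m (1 : Matrix (Fin 2) (Fin 2) R) l p =
    if p = l then 1 else 0 := by
  simp [symPowCoeff_of_offDiag_eq_zero]

lemma symPowCoeff_zero_right (l : ℕ) : symPowCoeff m g l 0 = g 0 1 ^ l * g 1 1 ^ (m - l) := by
  simp [symPowCoeff, symPowPoly, coeff_zero_eq_eval_zero]

lemma symPowCoeff_self_right {l : ℕ} (hl : l ≤ m) :
    symPowCoeff m g l m = g 0 0 ^ l * g 1 0 ^ (m - l) := by
  have hd : ∀ a b : R, (C a * X + C b).natDegree ≤ 1 := fun _ _ => natDegree_linear_le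
  have key := coeff_mul_add_eq_of_natDegree_le (natDegree_pow_le_of_le l (hd (g 0 0) (g 0 1)))
    (natDegree_pow_le_of_le (m - l) (hd (g 1 0) (g 1 1)))
  rw [coeff_pow_of_natDegree_le (hd _ _), coeff_pow_of_natDegree_le (hd _ _),
    show l * 1 + (m - l) * 1 = m by omega] at key
  simpa [symPowCoeff, symPowPoly] using key

lemma symPowCoeff_map {S : Type*} [CommSemiring S] (f : R →+* S) (l p : ℕ) :
    symPowCoeff m (g.map f) l p = f (symPowCoeff m g l p) := by
  simp [symPowCoeff, symPowPoly, ← coeff_map, Polynomial.map_mul, Polynomial.map_pow]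

lemma symPowCoeff_eq_sum (l p : ℕ) :
    symPowCoeff m g l p = ∑ j ∈ range (min l p + 1), (l.choose j * (m - l).choose (p - j) : R) *
      g 0 0 ^ j * g 0 1 ^ (l - j) * g 1 0 ^ (p - j) * g 1 1 ^ (m - l - (p - j)) := by
  rw [symPowCoeff, symPowPoly, coeff_mul, Nat.sum_antidiagonal_eq_sum_range_succ_mk]
  rw [← sum_subset (range_subset_range.2 (by omega : min l p + 1 ≤ p + 1))]
  · refine sum_congr rfl fun j _ => ?_
    rw [coeff_C_mul_X_add_C_pow, coeff_C_mul_X_add_C_pow]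
    ring
  · intro j hj hjmin
    simp only [mem_range] at hj hjmin
    rw [coeff_C_mul_X_add_C_pow, Nat.choose_eq_zero_of_lt (by omega : l < j)]
    simp

lemma factorial_mul_symPowCoeff_transpose {l p : ℕ} (hl : l ≤ m) (hp : p ≤ m) :
    (p ! * (m - p)! : R) * symPowCoeff m g l p = l ! * (m - l)! * symPowCoeff m gᵀ p l := by
  rw [symPowCoeff_eq_sum, symPowCoeff_eq_sum, min_comm, mul_sum, mul_sum]
  refine sum_congr rfl fun j hj => ?_
  have hjl : j ≤ l := by simp only [mem_range] at hj; omega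
  have hjp : j ≤ p := by simp only [mem_range] at hj; omega
  have key := congrArg (Nat.cast : ℕ → R) (factorial_mul_choose_mul_choose_comm hl hp hjl hjp)
  push_cast at key
  simp only [Matrix.transpose_apply, show m - p - (l - j) = m - l - (p - j) by omega]
  calc _ = (p ! * (m - p)! * (l.choose j * (m - l).choose (p - j)) : R) *
        (g 0 0 ^ j * g 0 1 ^ (l - j) * g 1 0 ^ (p - j) * g 1 1 ^ (m - l - (p - j))) := by ring
    _ = _ := by rw [key]; ring

lemma factorial_mul_symPowCoeff_conjTranspose [StarRing R] {l p : ℕ} (hl : l ≤ m) (hp : p ≤ m) :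
    (l ! * (m - l)! : R) * symPowCoeff m gᴴ p l = p ! * (m - p)! * star (symPowCoeff m g l p) := by
  have hconj : gᴴ = gᵀ.map (starRingEnd R) := rfl
  rw [hconj, symPowCoeff_map]
  calc _ = starRingEnd R ((l ! * (m - l)! : R) * symPowCoeff m gᵀ p l) := by simp
    _ = starRingEnd R ((p ! * (m - p)! : R) * symPowCoeff m g l p) := by
      rw [factorial_mul_symPowCoeff_transpose m g hl hp]
    _ = _ := by simp [starRingEnd_apply]

end CommSemiring

lemma sum_factorial_mul_norm_sq_symPowCoeff {𝕜 : Type*} [RCLike 𝕜] (m : ℕ)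
    {g : Matrix (Fin 2) (Fin 2) 𝕜} (hg : g * gᴴ = 1) {l : ℕ} (hl : l ≤ m) :
    ∑ q ∈ range (m + 1), (q ! * (m - q)! : ℝ) * ‖symPowCoeff m g l q‖ ^ 2 = l ! * (m - l)! := by
  have hcomp := symPowCoeff_mul m g gᴴ hl l
  rw [hg, symPowCoeff_one, if_pos rfl] at hcomp
  apply RCLike.ofReal_injective (K := 𝕜)
  push_cast
  calc ∑ q ∈ range (m + 1), (q ! * (m - q)! : 𝕜) * (‖symPowCoeff m g l q‖ : 𝕜) ^ 2
      = ∑ q ∈ range (m + 1), symPowCoeff m g l q *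
          ((q ! * (m - q)! : 𝕜) * star (symPowCoeff m g l q)) := by
        refine sum_congr rfl fun q _ => ?_
        rw [← RCLike.mul_conj, RCLike.star_def]
        ring
    _ = ∑ q ∈ range (m + 1),
          symPowCoeff m g l q * ((l ! * (m - l)! : 𝕜) * symPowCoeff m gᴴ q l) := by
        refine sum_congr rfl fun q hq => ?_
        rw [factorial_mul_symPowCoeff_conjTranspose m g hl (by simp only [mem_range] at hq; omega)]
    _ = l ! * (m - l)! := by
        simp_rw [mul_left_comm _ (l ! * (m - l)! : 𝕜), ← mul_sum, ← hcomp, mul_one]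

lemma eq_symPowCoeff_of_forall_eq_sum {K : Type*} [CommRing K] [IsDomain K] [Infinite K] (m : ℕ)
    (g : Matrix (Fin 2) (Fin 2) K) {l : ℕ} {a : ℕ → K}
    (ha : ∀ u v : K, (g 0 0 * u + g 0 1 * v) ^ l * (g 1 0 * u + g 1 1 * v) ^ (m - l) =
      ∑ p ∈ range (m + 1), a p * u ^ p * v ^ (m - p))
    {p : ℕ} (hp : p ≤ m) : a p = symPowCoeff m g l p := by
  have hpoly : ∑ q ∈ range (m + 1), C (a q) * X ^ q = symPowPoly m g l :=
    Polynomial.funext fun x => by simpa [symPowPoly, eval_finsetSum] using (ha x 1).symm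
  have := congrArg (coeff · p) hpoly
  simpa [symPowCoeff, finsetSum_coeff, coeff_C_mul_X_pow, Nat.lt_succ_iff.2 hp] using this

def su2Matrix (z w : ℂ) : Matrix (Fin 2) (Fin 2) ℂ := !![z, w; -conj w, conj z]

lemma su2Matrix_mul_conjTranspose {z w : ℂ} (h : ‖z‖ ^ 2 + ‖w‖ ^ 2 = 1) :
    su2Matrix z w * (su2Matrix z w)ᴴ = 1 := by
  have h' : z * conj z + w * conj w = 1 := by
    rw [Complex.mul_conj', Complex.mul_conj']; exact_mod_cast h
  ext i j
  fin_cases i <;> fin_cases j <;> simp [su2Matrix, Matrix.mul_apply, h'] <;>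
    first | ring1 | linear_combination h'

lemma factorial_mul_norm_sq_symPowCoeff_su2Matrix_lt {m l l' : ℕ} (hm : 1 ≤ m) (hl : l ≤ m)
    (hl' : l' ≤ m) (h1 : l' ≠ l) (h2 : l' ≠ m - l) {z w : ℂ} (h : ‖z‖ ^ 2 + ‖w‖ ^ 2 = 1) :
    (l' ! * (m - l')! : ℝ) * ‖symPowCoeff m (su2Matrix z w) l l'‖ ^ 2 < l ! * (m - l)! := by
  have hpos : (0 : ℝ) < l ! * (m - l)! := by positivity
  by_cases hw : w = 0
  · rw [symPowCoeff_of_offDiag_eq_zero _ _ (by simp [su2Matrix, hw]) (by simp [su2Matrix, hw]),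
      if_neg h1]
    simpa using hpos
  by_cases hz : z = 0
  · rw [symPowCoeff_of_diag_eq_zero _ _ (by simp [su2Matrix, hz]) (by simp [su2Matrix, hz]),
      if_neg h2]
    simpa using hpos
  obtain ⟨q, hqm, hql', hq⟩ : ∃ q ≤ m, q ≠ l' ∧ symPowCoeff m (su2Matrix z w) l q ≠ 0 := by
    by_cases h0 : l' = 0
    · exact ⟨m, le_rfl, by omega, by simp [symPowCoeff_self_right _ _ hl, su2Matrix, hz, hw]⟩
    · exact ⟨0, Nat.zero_le _, Ne.symm h0, by simp [symPowCoeff_zero_right, su2Matrix, hz, hw]⟩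
  rw [← sum_factorial_mul_norm_sq_symPowCoeff m (su2Matrix_mul_conjTranspose h) hl]
  exact single_lt_sum (f := fun q => (q ! * (m - q)! : ℝ) * ‖symPowCoeff m (su2Matrix z w) l q‖ ^ 2)
    hql' (mem_range_succ_iff.2 hl') (mem_range_succ_iff.2 hqm) (by positivity)
    fun _ _ _ => by positivity

lemma sqrt_mul_norm_symPowCoeff_su2Matrix_lt_one {m l l' : ℕ} (hm : 1 ≤ m) (hl : l ≤ m)
    (hl' : l' ≤ m) (h1 : l' ≠ l) (h2 : l' ≠ m - l) {z w : ℂ} (h : ‖z‖ ^ 2 + ‖w‖ ^ 2 = 1) :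
    √((l' ! * (m - l')! : ℝ) / (l ! * (m - l)!)) * ‖symPowCoeff m (su2Matrix z w) l l'‖ < 1 := by
  rw [← Real.sqrt_sq (norm_nonneg _), ← Real.sqrt_mul (by positivity), Real.sqrt_lt' one_pos,
    div_mul_eq_mul_div, div_lt_iff₀ (by positivity), one_pow, one_mul]
  exact factorial_mul_norm_sq_symPowCoeff_su2Matrix_lt hm hl hl' h1 h2 h

lemma continuous_symPowCoeff_su2Matrix (m l p : ℕ) :
    Continuous fun x : ℂ × ℂ => symPowCoeff m (su2Matrix x.1 x.2) l p := by
  simp only [symPowCoeff_eq_sum, su2Matrix]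
  simp only [Matrix.of_apply, Matrix.cons_val', Matrix.cons_val_zero, Matrix.cons_val_one,
    Matrix.empty_val', Matrix.cons_val_fin_one]
  fun_prop

lemma isCompact_norm_sq_add_norm_sq_eq_one :
    IsCompact {x : ℂ × ℂ | ‖x.1‖ ^ 2 + ‖x.2‖ ^ 2 = 1} := by
  refine Metric.isCompact_of_isClosed_isBounded (isClosed_eq (by fun_prop) continuous_const)
    ((Metric.isBounded_closedBall (x := 0) (r := 1)).subset fun x hx => ?_)
  simp only [Set.mem_ofPred_eq] at hx
  simp only [Metric.mem_closedBall, dist_zero_right, Prod.norm_def, sup_le_iff]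
  constructor <;> nlinarith [norm_nonneg x.1, norm_nonneg x.2]

/-- For `1 ≤ m`, `l ≤ m`, `l' ≤ m` with `l' ≠ l` and `l' ≠ m - l`, there is a
constant `C < 1` bounding, uniformly over `{z,w} ∈ SU(2)`, the normalized coefficient of
`ζ^{l'} ω^{m-l'}` in the expansion of `(zζ+wω)^l (−conj(w)ζ+conj(z)ω)^{m−l}`. -/
theorem stmt0 (m l l' : ℕ) (hm : 1 ≤ m) (hl : l ≤ m) (hl' : l' ≤ m)
    (h1 : l' ≠ l) (h2 : l' ≠ m - l) :
    ∃ C : ℝ, C < 1 ∧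
      ∀ z w : ℂ, ‖z‖ ^ 2 + ‖w‖ ^ 2 = 1 →
        ∀ a : ℕ → ℂ,
          (∀ ζ ω : ℂ,
              (z * ζ + w * ω) ^ l *
                  (-(starRingEnd ℂ w) * ζ + (starRingEnd ℂ z) * ω) ^ (m - l) =
                ∑ p ∈ Finset.range (m + 1), a p * ζ ^ p * ω ^ (m - p)) →
          Real.sqrt ((l'.factorial * (m - l').factorial : ℝ) /
              (l.factorial * (m - l).factorial)) * ‖a l'‖ ≤ C := by
  obtain ⟨x₀, hx₀, hmax⟩ := isCompact_norm_sq_add_norm_sq_eq_one.exists_isMaxOn ⟨(1, 0), by simp⟩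
    (f := fun x => √((l' ! * (m - l')! : ℝ) / (l ! * (m - l)!)) *
      ‖symPowCoeff m (su2Matrix x.1 x.2) l l'‖)
    (continuous_const.mul (continuous_symPowCoeff_su2Matrix m l l').norm).continuousOn
  refine ⟨_, sqrt_mul_norm_symPowCoeff_su2Matrix_lt_one hm hl hl' h1 h2 hx₀, fun z w hzw a ha => ?_⟩
  rw [eq_symPowCoeff_of_forall_eq_sum m (su2Matrix z w) (a := a)
    (by simpa [su2Matrix] using ha) hl']
  exact isMaxOn_iff.1 hmax (z, w) hzw
end

section
/- Let m ≥ 1 and 0 ≤ l ≤ m be integers, and let z, w ∈ ℂ with |z|² + |w|² = 1. Suppose there exist c ∈ ℂ and an integer 0 ≤ l' ≤ m such that (zζ+wω)^l·(−conj(w)ζ+conj(z)ω)^{m−l} = c·ζ^{l'}ω^{m−l'} identically as polynomials in (ζ,ω). Then zw = 0; moreover, if w = 0 then l' = l, and if z = 0 then l' = m − l. In particular, the only monomials ζ^{l'}ω^{m−l'} that lie (up to scalar) in the SU(2)-orbit of ζ^l ω^{m−l} are those with l' ∈ {l, m−l}. -/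
/-!
The substitution `(ζ, ω) ↦ (zζ + wω, −w̄ζ + z̄ω)` is invertible, so the image of `ζ^l ω^{m−l}`
is not zero and hence `c ≠ 0`. A product of powers of two linear forms can only be a monomial if
each linear form occurring in it is itself a monomial, since it vanishes on the kernel of each
factor; this gives `zw = 0`. Once `z` or `w` vanishes the image is an explicit monomial, and its
exponents are read off by evaluating at `(1, 1)` and `(2, 1)`.
-/

section LinearForms

variable {k n i j : ℕ}

theorem coeff_ne_zero_of_pow_mul_pow_eq_monomial {K : Type*} [Field K] {a b c d e : K}
    (hdet : a * d - b * c ≠ 0)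
    (h : ∀ x y : K, (a * x + b * y) ^ k * (c * x + d * y) ^ n = e * x ^ i * y ^ j) :
    e ≠ 0 := by
  rintro rfl
  set D := a * d - b * c
  -- the preimage of `(1, 1)` under the substitution
  have h₁ := h ((d - b) / D) ((a - c) / D)
  have ha : a * ((d - b) / D) + b * ((a - c) / D) = 1 := by
    rw [mul_div_assoc', mul_div_assoc', ← add_div, div_eq_one_iff_eq hdet]; ring
  have hc : c * ((d - b) / D) + d * ((a - c) / D) = 1 := by
    rw [mul_div_assoc', mul_div_assoc', ← add_div, div_eq_one_iff_eq hdet]; ring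
  simp [ha, hc] at h₁

variable {R : Type*} [CommRing R] [IsDomain R]

theorem eq_zero_or_eq_zero_of_pow_mul_pow_eq_monomial {a b c d e : R} (hk : k ≠ 0) (he : e ≠ 0)
    (h : ∀ x y : R, (a * x + b * y) ^ k * (c * x + d * y) ^ n = e * x ^ i * y ^ j) :
    a = 0 ∨ b = 0 := by
  have h₀ := h (-b) a
  rw [show a * -b + b * a = 0 by ring, zero_pow hk, zero_mul, eq_comm] at h₀
  simp only [mul_eq_zero, pow_eq_zero_iff', neg_eq_zero, he, false_or] at h₀
  tauto

theorem exponent_eq_of_monomial_eq_monomial [CharZero R] {a e : R} (he : e ≠ 0)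
    (h : ∀ x y : R, a * x ^ k * y ^ n = e * x ^ i * y ^ j) : k = i := by
  have h₁ := h 1 1
  have h₂ := h 2 1
  simp only [one_pow, mul_one] at h₁ h₂
  subst h₁
  have h₂' : ((2 ^ k : ℕ) : R) = ((2 ^ i : ℕ) : R) := by
    push_cast
    exact mul_left_cancel₀ he (by linear_combination h₂)
  exact Nat.pow_right_injective le_rfl (Nat.cast_injective h₂')

end LinearForms

theorem stmt3_general (m l l' : ℕ) (hm : 1 ≤ m)
    (z w : ℂ) (hzw : ‖z‖ ^ 2 + ‖w‖ ^ 2 = 1) (c : ℂ)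
    (h : ∀ ζ ω : ℂ,
        (z * ζ + w * ω) ^ l * (-(starRingEnd ℂ w) * ζ + (starRingEnd ℂ z) * ω) ^ (m - l) =
          c * ζ ^ l' * ω ^ (m - l')) :
    z * w = 0 ∧ (w = 0 → l' = l) ∧ (z = 0 → l' = m - l) := by
  have hdet : z * starRingEnd ℂ z - w * -starRingEnd ℂ w = 1 := by
    rw [mul_neg, sub_neg_eq_add, Complex.mul_conj, Complex.mul_conj, ← Complex.sq_norm,
      ← Complex.sq_norm]
    exact_mod_cast hzw
  have hc : c ≠ 0 := coeff_ne_zero_of_pow_mul_pow_eq_monomial (hdet ▸ one_ne_zero) h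
  refine ⟨?_, fun hw => ?_, fun hz => ?_⟩
  · rcases Nat.eq_zero_or_pos l with rfl | hl
    · have h' := eq_zero_or_eq_zero_of_pow_mul_pow_eq_monomial (by omega) hc
        fun x y => (mul_comm _ _).trans (h x y)
      simp only [neg_eq_zero, map_eq_zero] at h'
      simp [h'.symm]
    · simpa using eq_zero_or_eq_zero_of_pow_mul_pow_eq_monomial hl.ne' hc h
  · subst hw
    exact (exponent_eq_of_monomial_eq_monomial (a := z ^ l * starRingEnd ℂ z ^ (m - l)) (n := m - l) hc
      fun x y => by
      rw [← h x y]; simp only [map_zero]; ring).symm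
  · subst hz
    exact (exponent_eq_of_monomial_eq_monomial (a := w ^ l * (-starRingEnd ℂ w) ^ (m - l)) (n := l) hc
      fun x y => by
      rw [← h x y]; simp only [map_zero]; ring).symm

/-- If `{z,w} ∈ SU(2)` sends the monomial `ζ^l ω^{m−l}` to a scalar multiple of a
monomial `ζ^{l'} ω^{m−l'}`, then `zw = 0`; moreover `w = 0` forces `l' = l` and `z = 0` forces
`l' = m − l`. -/
theorem stmt3 (m l l' : ℕ) (hm : 1 ≤ m) (hl : l ≤ m) (hl' : l' ≤ m)
    (z w : ℂ) (hzw : ‖z‖ ^ 2 + ‖w‖ ^ 2 = 1) (c : ℂ)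
    (h : ∀ ζ ω : ℂ,
        (z * ζ + w * ω) ^ l * (-(starRingEnd ℂ w) * ζ + (starRingEnd ℂ z) * ω) ^ (m - l) =
          c * ζ ^ l' * ω ^ (m - l')) :
    z * w = 0 ∧ (w = 0 → l' = l) ∧ (z = 0 → l' = m - l) :=
  stmt3_general m l l' hm z w hzw c h
end

section
/- Let l ≥ 1 be an integer and let z, w ∈ ℂ with |z|² + |w|² = 1. The polynomial (zζ+wω)^l·(−conj(w)ζ+conj(z)ω)^l is a complex scalar multiple of (ζω)^l if and only if zw = 0, i.e. if and only if the matrix {z,w} ∈ SU(2) is diagonal or antidiagonal (an element of the normalizer of the diagonal torus). -/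
theorem exists_linearForm_pow_mul_pow_eq_iff {R : Type*} [CommRing R] [IsReduced R] {l : ℕ}
    (hl : l ≠ 0) (a b c d : R) :
    (∃ k : R, ∀ ζ ω : R, (a * ζ + b * ω) ^ l * (c * ζ + d * ω) ^ l = k * (ζ * ω) ^ l) ↔
      a * c = 0 ∧ b * d = 0 := by
  constructor
  · rintro ⟨k, hk⟩
    have hac := hk 1 0
    have hbd := hk 0 1
    simp only [mul_one, mul_zero, add_zero, zero_add, zero_pow hl, ← mul_pow] at hac hbd
    exact ⟨IsReduced.eq_zero _ ⟨l, hac⟩, IsReduced.eq_zero _ ⟨l, hbd⟩⟩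
  · rintro ⟨hac, hbd⟩
    refine ⟨(a * d + b * c) ^ l, fun ζ ω => ?_⟩
    have hprod : (a * ζ + b * ω) * (c * ζ + d * ω) = (a * d + b * c) * (ζ * ω) := by
      linear_combination ζ ^ 2 * hac + ω ^ 2 * hbd
    rw [← mul_pow, hprod, mul_pow]

theorem stmt4_general (l : ℕ) (hl : 1 ≤ l) (z w : ℂ) :
    (∃ c : ℂ, ∀ ζ ω : ℂ,
        (z * ζ + w * ω) ^ l * (-(starRingEnd ℂ w) * ζ + (starRingEnd ℂ z) * ω) ^ l =
          c * (ζ * ω) ^ l) ↔ z * w = 0 := by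
  rw [exists_linearForm_pow_mul_pow_eq_iff (by omega)]
  simp only [mul_neg, neg_eq_zero, mul_eq_zero, map_eq_zero]
  tauto

/-- For `l ≥ 1` and `{z,w} ∈ SU(2)`, the polynomial
`(zζ+wω)^l (−conj(w)ζ+conj(z)ω)^l` is a scalar multiple of `(ζω)^l` iff `zw = 0`, i.e. iff the
matrix `{z,w}` is diagonal or antidiagonal (lies in the normalizer of the diagonal torus). -/
theorem stmt4 (l : ℕ) (hl : 1 ≤ l) (z w : ℂ)
    (hzw : ‖z‖ ^ 2 + ‖w‖ ^ 2 = 1) :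
    (∃ c : ℂ, ∀ ζ ω : ℂ,
        (z * ζ + w * ω) ^ l * (-(starRingEnd ℂ w) * ζ + (starRingEnd ℂ z) * ω) ^ l =
          c * (ζ * ω) ^ l) ↔ z * w = 0 :=
  stmt4_general l hl z w
end

section
/- Let l ≥ 0 be an integer and let z, w ∈ ℂ be arbitrary. Then the coefficient of the monomial ζ^l ω^l in the homogeneous polynomial (zζ+wω)^l·(−conj(w)ζ+conj(z)ω)^l (a polynomial in the two variables ζ, ω) equals Σ_{i=0}^{l} (−1)^i · (binom(l,i))² · |z|^{2(l−i)} · |w|^{2i}. -/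
/-!
Expanding both binomials, the monomial `ζ^l ω^l` arises exactly from pairing the `ω^i` term of
the first factor with the `ω^(l-i)` term of the second, which contributes
`binom(l,i)² (z conj z)^(l-i) (w · (-conj w))^i`.
-/

open MvPolynomial

section LinearForms

variable {R : Type*} [CommSemiring R]

theorem linearForm_pow_eq_sum_monomial (a b : R) (l : ℕ) :
    (C a * X (0 : Fin 2) + C b * X 1) ^ l =
      ∑ i ∈ Finset.range (l + 1),
        monomial (Finsupp.single 0 (l - i) + Finsupp.single 1 i)
          (l.choose i * a ^ (l - i) * b ^ i) := by
  rw [add_comm, add_pow]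
  refine Finset.sum_congr rfl fun i _ => ?_
  rw [monomial_add_single, ← C_mul_X_pow_eq_monomial]
  simp only [mul_pow, C_mul, C_pow, map_natCast]
  ring

theorem single_add_single_add_eq_iff {l i : ℕ} (j : ℕ) (hi : i ≤ l) :
    (Finsupp.single 0 (l - i) + Finsupp.single 1 i +
      (Finsupp.single 0 (l - j) + Finsupp.single 1 j) : Fin 2 →₀ ℕ) =
      Finsupp.single 0 l + Finsupp.single 1 l ↔ j = l - i := by
  rw [Finsupp.ext_iff, Fin.forall_fin_two]
  simp only [Finsupp.add_apply, Finsupp.single_eq_same, Finsupp.single_eq_of_ne zero_ne_one,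
    Finsupp.single_eq_of_ne one_ne_zero]
  omega

theorem coeff_linearForm_pow_mul_linearForm_pow (a b c d : R) (l : ℕ) :
    coeff (Finsupp.single 0 l + Finsupp.single 1 l)
        ((C a * X (0 : Fin 2) + C b * X 1) ^ l * (C c * X 0 + C d * X 1) ^ l) =
      ∑ i ∈ Finset.range (l + 1), (l.choose i : R) ^ 2 * (a * d) ^ (l - i) * (b * c) ^ i := by
  rw [linearForm_pow_eq_sum_monomial, linearForm_pow_eq_sum_monomial, Finset.sum_mul_sum]
  simp only [monomial_mul, coeff_sum, coeff_monomial]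
  refine Finset.sum_congr rfl fun i hi => ?_
  have hil : i ≤ l := Nat.lt_succ_iff.mp (Finset.mem_range.mp hi)
  rw [Finset.sum_congr rfl fun j _ => if_congr (single_add_single_add_eq_iff j hil) rfl rfl,
    Finset.sum_ite_eq' _ _ _, if_pos (Finset.mem_range.mpr (by omega)),
    Nat.sub_sub_self hil, Nat.choose_symm hil]
  ring

end LinearForms

theorem Complex.ofReal_norm_pow_two_mul (z : ℂ) (k : ℕ) :
    ((‖z‖ : ℝ) : ℂ) ^ (2 * k) = (z * starRingEnd ℂ z) ^ k := by
  rw [pow_mul, Complex.mul_conj, Complex.normSq_eq_norm_sq, Complex.ofReal_pow]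

/-- The coefficient of `ζ^l ω^l` in `(zζ+wω)^l (−conj(w)ζ+conj(z)ω)^l` equals
`∑_{i=0}^{l} (−1)^i (binom(l,i))² |z|^{2(l−i)} |w|^{2i}`. -/
theorem stmt5 (l : ℕ) (z w : ℂ) :
    MvPolynomial.coeff
        ((Finsupp.single 0 l + Finsupp.single 1 l : Fin 2 →₀ ℕ))
        ((MvPolynomial.C z * MvPolynomial.X (0 : Fin 2) +
              MvPolynomial.C w * MvPolynomial.X 1) ^ l *
          (MvPolynomial.C (-(starRingEnd ℂ w)) * MvPolynomial.X 0 +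
              MvPolynomial.C (starRingEnd ℂ z) * MvPolynomial.X 1) ^ l) =
      ∑ i ∈ Finset.range (l + 1),
        (-1 : ℂ) ^ i * (l.choose i : ℂ) ^ 2 *
          ((‖z‖ : ℝ) : ℂ) ^ (2 * (l - i)) * ((‖w‖ : ℝ) : ℂ) ^ (2 * i) := by
  rw [coeff_linearForm_pow_mul_linearForm_pow]
  refine Finset.sum_congr rfl fun i _ => ?_
  rw [Complex.ofReal_norm_pow_two_mul, Complex.ofReal_norm_pow_two_mul, mul_neg, neg_pow]
  ring
end

section
/- Let γ, τ > 0 and let α ∈ ℝ satisfy |kα|_ℤ ≥ γ⁻¹|k|^{−τ} for every nonzero integer k. Let β ∈ ℝ, N a positive integer, K ≥ 2^{τ+1} γ N^τ, and suppose k₀ ∈ ℤ with |k₀| ≤ N satisfies ε := |β − k₀α|_ℤ < K⁻¹. Then for every integer k ≠ k₀ with |k − k₀|^τ ≤ K/(γ(1+Kε)), one has |β − kα|_ℤ ≥ K⁻¹. -/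
/-- The distance from a real number to the nearest integer, `|t|_ℤ`. -/
noncomputable def distInt (t : ℝ) : ℝ := |t - round t|

lemma distInt_le (t : ℝ) (n : ℤ) : distInt t ≤ |t - n| := round_le t n

lemma distInt_add_le (a b : ℝ) : distInt (a + b) ≤ distInt a + distInt b := by
  calc distInt (a + b) ≤ |a + b - ((round a + round b : ℤ) : ℝ)| := distInt_le _ _
    _ ≤ distInt a + distInt b := by
        push_cast
        rw [show a + b - ((round a : ℝ) + round b) = (a - round a) + (b - round b) by ring]
        exact abs_add_le _ _

lemma distInt_neg_le (t : ℝ) : distInt (-t) ≤ distInt t := by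
  calc distInt (-t) ≤ |-t - ((-round t : ℤ) : ℝ)| := distInt_le _ _
    _ = |t - round t| := by push_cast; rw [← abs_neg]; ring_nf

/-- If `α ∈ DC(γ,τ)`, `K ≥ 2^{τ+1} γ N^τ`, and `k₀` with `|k₀| ≤ N` satisfies
`ε := |β − k₀α|_ℤ < K⁻¹`, then every `k ≠ k₀` with `|k − k₀|^τ ≤ K/(γ(1+Kε))` satisfies
`|β − kα|_ℤ ≥ K⁻¹`. -/
theorem stmt10 (γ τ : ℝ) (hγ : 0 < γ) (hτ : 0 < τ) (α : ℝ)
    (hα : ∀ k : ℤ, k ≠ 0 → γ⁻¹ * |(k : ℝ)| ^ (-τ) ≤ distInt (k * α))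
    (β : ℝ) (N : ℕ) (hN : 1 ≤ N) (K : ℝ) (hK : (2 : ℝ) ^ (τ + 1) * γ * (N : ℝ) ^ τ ≤ K)
    (k₀ : ℤ) (hk₀ : |k₀| ≤ (N : ℤ)) (hres : distInt (β - k₀ * α) < K⁻¹) :
    ∀ k : ℤ, k ≠ k₀ →
      |((k - k₀ : ℤ) : ℝ)| ^ τ ≤ K / (γ * (1 + K * distInt (β - k₀ * α))) →
      K⁻¹ ≤ distInt (β - k * α) := by
  intro k hk hkk
  set ε := distInt (β - k₀ * α) with hε
  have hεnn : 0 ≤ ε := abs_nonneg _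
  have hN' : (0 : ℝ) < N := by exact_mod_cast Nat.lt_of_lt_of_le Nat.zero_lt_one hN
  have hKpos : 0 < K := lt_of_lt_of_le (by positivity) hK
  set m : ℤ := k - k₀ with hm
  have hm0 : m ≠ 0 := sub_ne_zero.mpr hk
  have hmabs : (1 : ℝ) ≤ |(m : ℝ)| := by
    rw [← Int.cast_abs]; exact_mod_cast Int.one_le_abs hm0
  have hmpos : (0 : ℝ) < |(m : ℝ)| ^ τ := Real.rpow_pos_of_pos (by linarith) τ
  have hD : 0 < γ * (1 + K * ε) := by positivity
  -- from hkk : |m|^τ * (γ*(1+K*ε)) ≤ K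
  have hkk' : |(m : ℝ)| ^ τ * (γ * (1 + K * ε)) ≤ K := (le_div_iff₀ hD).mp hkk
  -- key : (1+K*ε)/K ≤ (γ * |m|^τ)⁻¹
  have hP : 0 < γ * |(m : ℝ)| ^ τ := by positivity
  have key : (1 + K * ε) / K ≤ (γ * |(m : ℝ)| ^ τ)⁻¹ := by
    rw [inv_eq_one_div, div_le_div_iff₀ hKpos hP]
    nlinarith [hkk']
  have hdiv : (1 + K * ε) / K = K⁻¹ + ε := by field_simp
  have hαm := hα m hm0
  have hinv : γ⁻¹ * |(m : ℝ)| ^ (-τ) = (γ * |(m : ℝ)| ^ τ)⁻¹ := by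
    rw [Real.rpow_neg (abs_nonneg _), mul_inv]
  -- triangle inequality
  have htri : distInt ((m : ℝ) * α) ≤ ε + distInt (β - k * α) := by
    have h1 : (m : ℝ) * α = (β - k₀ * α) + -(β - k * α) := by
      rw [hm]; push_cast; ring
    calc distInt ((m : ℝ) * α) = distInt ((β - k₀ * α) + -(β - k * α)) := by rw [h1]
      _ ≤ ε + distInt (-(β - k * α)) := distInt_add_le _ _
      _ ≤ ε + distInt (β - k * α) := by
          have := distInt_neg_le (β - k * α); linarith
  rw [hinv] at hαm
  linarith [key, hαm, htri, hdiv.symm.le, hdiv.le]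
end

section
/- Let τ > 0 and s ∈ ℕ. There exists a constant C > 0, depending only on s and τ, with the following property: for every γ > 0, every α ∈ ℝ with |kα|_ℤ ≥ γ⁻¹|k|^{−τ} for all nonzero integers k, every integer N ≥ 1, and every trigonometric polynomial f(x) = Σ_{0<|k|≤N} c_k e^{2πikx}, there exists a trigonometric polynomial Y(x) = Σ_{0<|k|≤N} d_k e^{2πikx} such that Y(x+α) − Y(x) = f(x) for all x ∈ ℝ, and ‖Y‖_{C^s} ≤ C γ N^{s+τ+1} sup_{x∈ℝ} |f(x)|. -/
/-- The trigonometric polynomial with spectrum in the finite set `S` and coefficients `c`. -/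
noncomputable def trig (S : Finset ℤ) (c : ℤ → ℂ) (x : ℝ) : ℂ :=
  ∑ k ∈ S, c k * Complex.exp (2 * Real.pi * Complex.I * k * x)

/-!
Solve the equation coefficientwise: `d k = c k / (e(kα) - 1)` with `e(t) = exp(2πit)`.
Since `|e(t) - 1| = 2|sin πt| ≥ 4|t|_ℤ`, the Diophantine condition gives
`|e(kα) - 1| ≥ 4γ⁻¹N^{-τ}` for `0 < |k| ≤ N`, while each coefficient satisfies
`|c k| ≤ sup |f|` (it is an average of `f` against a unimodular function). Differentiating
`σ ≤ s` times multiplies `d k` by `(2πik)^σ`, and summing over the `2N` frequencies gives the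
bound with `C = (2π)^s`.
-/

open Complex Real Finset

def Diophantine (γ τ α : ℝ) : Prop :=
  ∀ k : ℤ, k ≠ 0 → γ⁻¹ * |(k : ℝ)| ^ (-τ) ≤ distInt (k * α)

section Trig

variable (S : Finset ℤ) (c : ℤ → ℂ)

lemma norm_cexp_two_pi_I_mul (k : ℤ) (x : ℝ) : ‖cexp (2 * π * I * k * x)‖ = 1 := by
  rw [norm_exp]
  simp

lemma hasDerivAt_trig (x : ℝ) :
    HasDerivAt (trig S c) (trig S (fun k => 2 * π * I * k * c k) x) x := by
  refine HasDerivAt.fun_sum fun k _ => ?_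
  have h := (((hasDerivAt_id x).ofReal_comp.const_mul (2 * π * I * k)).cexp).const_mul (c k)
  simp only [id_eq, ofReal_one, mul_one] at h
  exact h.congr_deriv (by ring)

lemma iteratedDeriv_trig (σ : ℕ) :
    iteratedDeriv σ (trig S c) = trig S (fun k => (2 * π * I * k) ^ σ * c k) := by
  induction σ with
  | zero => simp
  | succ n ih =>
    funext x
    rw [iteratedDeriv_succ, ih, (hasDerivAt_trig S _ x).deriv]
    congr 1
    funext k
    ring

lemma norm_trig_le_sum (x : ℝ) : ‖trig S c x‖ ≤ ∑ k ∈ S, ‖c k‖ :=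
  (norm_sum_le _ _).trans_eq <| sum_congr rfl fun k _ => by
    rw [norm_mul, norm_cexp_two_pi_I_mul, mul_one]

lemma norm_trig_le_card_mul {B : ℝ} (hB : ∀ k ∈ S, ‖c k‖ ≤ B) (x : ℝ) :
    ‖trig S c x‖ ≤ #S * B :=
  (norm_trig_le_sum S c x).trans <| by simpa using sum_le_card_nsmul S _ _ hB

lemma bddAbove_range_norm_trig : BddAbove (Set.range fun x => ‖trig S c x‖) :=
  ⟨∑ k ∈ S, ‖c k‖, Set.forall_mem_range.2 (norm_trig_le_sum S c)⟩

lemma norm_iteratedDeriv_trig_le {N B : ℝ} (hSN : ∀ k ∈ S, |(k : ℝ)| ≤ N)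
    (hB : ∀ k ∈ S, ‖c k‖ ≤ B) (σ : ℕ) (x : ℝ) :
    ‖iteratedDeriv σ (trig S c) x‖ ≤ #S * ((2 * π * N) ^ σ * B) := by
  rw [iteratedDeriv_trig]
  refine norm_trig_le_card_mul S _ (fun k hk => ?_) x
  rw [norm_mul, norm_pow]
  have hnorm : ‖2 * π * I * k‖ = 2 * π * |(k : ℝ)| := by
    simp [abs_of_pos pi_pos, Complex.norm_intCast]
  rw [hnorm]
  have hN : 0 ≤ N := (abs_nonneg _).trans (hSN k hk)
  gcongr
  · exact hSN k hk
  · exact hB k hk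

lemma integral_cexp_two_pi_I_int_mul (m : ℤ) :
    ∫ x in (0 : ℝ)..1, cexp (2 * π * I * m * x) = if m = 0 then 1 else 0 := by
  split_ifs with hm
  · simp [hm]
  have hc : 2 * π * I * m ≠ 0 := by simp [pi_ne_zero, hm]
  rw [integral_exp_mul_complex hc]
  have h1 : 2 * π * I * m * ((1 : ℝ) : ℂ) = m * (2 * π * I) := by push_cast; ring
  rw [h1, exp_int_mul_two_pi_mul_I]
  simp

lemma integral_trig_mul_cexp {k : ℤ} (hk : k ∈ S) :
    ∫ x in (0 : ℝ)..1, trig S c x * cexp (2 * π * I * (-k) * x) = c k := by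
  have hprod (x : ℝ) : trig S c x * cexp (2 * π * I * (-k) * x)
      = ∑ j ∈ S, c j * cexp (2 * π * I * (j - k : ℤ) * x) := by
    rw [trig, sum_mul]
    refine sum_congr rfl fun j _ => ?_
    rw [mul_assoc, ← Complex.exp_add]
    push_cast
    ring_nf
  simp_rw [hprod]
  rw [intervalIntegral.integral_finsetSum fun j _ =>
    (by fun_prop : Continuous _).intervalIntegrable _ _]
  simp_rw [intervalIntegral.integral_const_mul, integral_cexp_two_pi_I_int_mul, sub_eq_zero,
    mul_ite, mul_one, mul_zero]
  simp [hk]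

lemma norm_coeff_le_of_norm_trig_le {M : ℝ} (hM : ∀ x, ‖trig S c x‖ ≤ M) {k : ℤ} (hk : k ∈ S) :
    ‖c k‖ ≤ M := by
  rw [← integral_trig_mul_cexp S c hk]
  have hbound : ∀ x ∈ Set.uIoc (0 : ℝ) 1, ‖trig S c x * cexp (2 * π * I * (-k) * x)‖ ≤ M :=
    fun x _ => by
      rw [norm_mul, ← Int.cast_neg, norm_cexp_two_pi_I_mul, mul_one]
      exact hM x
  simpa using intervalIntegral.norm_integral_le_of_norm_le_const hbound

end Trig

lemma four_mul_distInt_le_norm_cexp_sub_one (t : ℝ) :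
    4 * distInt t ≤ ‖cexp (2 * π * I * t) - 1‖ := by
  set u := t - round t
  have hu : |u| ≤ 1 / 2 := abs_sub_round t
  have hperiodic : cexp (2 * π * I * t) = cexp (I * (2 * π * u : ℝ)) := by
    have : 2 * π * I * t = I * (2 * π * u : ℝ) + round t * (2 * π * I) := by
      simp only [u]
      push_cast
      ring
    rw [this, Complex.exp_add, exp_int_mul_two_pi_mul_I, mul_one]
  have hjordan : 2 / π * |π * u| ≤ |Real.sin (π * u)| :=
    mul_abs_le_abs_sin <| by
      rw [abs_mul, abs_of_pos pi_pos]
      nlinarith [pi_pos]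
  rw [hperiodic, norm_exp_I_mul_ofReal_sub_one, Real.norm_eq_abs, abs_mul, abs_two,
    show 2 * π * u / 2 = π * u by ring, distInt]
  rw [abs_mul, abs_of_pos pi_pos, ← mul_assoc, div_mul_cancel₀ _ pi_ne_zero] at hjordan
  linarith

lemma trig_add_sub_trig_of_mul_eq {S : Finset ℤ} {c d : ℤ → ℂ} {α : ℝ}
    (h : ∀ k ∈ S, d k * (cexp (2 * π * I * k * α) - 1) = c k) (x : ℝ) :
    trig S d (x + α) - trig S d x = trig S c x := by
  rw [trig, trig, trig, ← sum_sub_distrib]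
  refine sum_congr rfl fun k hk => ?_
  rw [← h k hk, ofReal_add, mul_add, Complex.exp_add]
  ring

lemma Diophantine.le_norm_cexp_sub_one {γ τ α N : ℝ} (hα : Diophantine γ τ α) (hγ : 0 ≤ γ)
    (hτ : 0 ≤ τ) {k : ℤ} (hk : k ≠ 0) (hkN : |(k : ℝ)| ≤ N) :
    4 * γ⁻¹ * N ^ (-τ) ≤ ‖cexp (2 * π * I * k * α) - 1‖ := by
  have hk_pos : 0 < |(k : ℝ)| := by positivity
  calc 4 * γ⁻¹ * N ^ (-τ) ≤ 4 * (γ⁻¹ * |(k : ℝ)| ^ (-τ)) := by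
        rw [← mul_assoc]
        exact mul_le_mul_of_nonneg_left (rpow_le_rpow_of_nonpos hk_pos hkN (neg_nonpos.2 hτ))
          (by positivity)
    _ ≤ 4 * distInt (k * α) := by gcongr; exact hα k hk
    _ ≤ ‖cexp (2 * π * I * k * α) - 1‖ := by
        simpa [mul_assoc] using four_mul_distInt_le_norm_cexp_sub_one (k * α)

lemma Diophantine.exists_trig_add_sub_trig_eq {γ τ α N M : ℝ} (hα : Diophantine γ τ α)
    (hγ : 0 < γ) (hτ : 0 ≤ τ) {S : Finset ℤ} (h0 : 0 ∉ S) (hSN : ∀ k ∈ S, |(k : ℝ)| ≤ N)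
    {c : ℤ → ℂ} (hM : ∀ x, ‖trig S c x‖ ≤ M) :
    ∃ d : ℤ → ℂ, (∀ x, trig S d (x + α) - trig S d x = trig S c x) ∧
      ∀ k ∈ S, ‖d k‖ ≤ γ * N ^ τ * M / 4 := by
  have hk0 (k) (hk : k ∈ S) : k ≠ 0 := ne_of_mem_of_not_mem hk h0
  have hN (k) (hk : k ∈ S) : 0 < N :=
    (abs_pos.2 (Int.cast_ne_zero.2 (hk0 k hk))).trans_le (hSN k hk)
  have hpos (k) (hk : k ∈ S) : 0 < 4 * γ⁻¹ * N ^ (-τ) := by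
    have := hN k hk
    positivity
  have hle (k) (hk : k ∈ S) := hα.le_norm_cexp_sub_one hγ.le hτ (hk0 k hk) (hSN k hk)
  refine ⟨fun k => c k / (cexp (2 * π * I * k * α) - 1), trig_add_sub_trig_of_mul_eq ?_, ?_⟩
  · intro k hk
    have hne : cexp (2 * π * I * k * α) - 1 ≠ 0 :=
      norm_pos_iff.1 <| (hpos k hk).trans_le (hle k hk)
    exact div_mul_cancel₀ _ hne
  · intro k hk
    calc ‖c k / (cexp (2 * π * I * k * α) - 1)‖ ≤ M / (4 * γ⁻¹ * N ^ (-τ)) := by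
          rw [norm_div]
          exact div_le_div₀ ((norm_nonneg _).trans (hM 0)) (norm_coeff_le_of_norm_trig_le S c hM hk)
            (hpos k hk) (hle k hk)
      _ = γ * N ^ τ * M / 4 := by
          rw [rpow_neg (hN k hk).le]
          field_simp

lemma card_Icc_neg_erase_zero (N : ℕ) : #((Icc (-(N : ℤ)) N).erase 0) = 2 * N := by
  rw [card_erase_of_mem (by simp), Int.card_Icc]
  omega

lemma abs_le_of_mem_Icc_neg_erase_zero {N : ℕ} {k : ℤ} (hk : k ∈ (Icc (-(N : ℤ)) N).erase 0) :
    |(k : ℝ)| ≤ N := by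
  have hk' := mem_Icc.1 (mem_of_mem_erase hk)
  exact abs_le.2 ⟨by exact_mod_cast hk'.1, by exact_mod_cast hk'.2⟩

/-- For `τ > 0` and `s ∈ ℕ` there is `C > 0` such that for every `γ > 0`, every
`α ∈ DC(γ,τ)`, every `N ≥ 1` and every trigonometric polynomial `f` with spectrum in
`{k : 0 < |k| ≤ N}`, the cohomological equation `Y(·+α) − Y = f` has a trigonometric polynomial
solution with the same spectrum and `‖Y‖_{C^s} ≤ C γ N^{s+τ+1} sup |f|`. -/
theorem stmt11 (τ : ℝ) (hτ : 0 < τ) (s : ℕ) :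
    ∃ C : ℝ, 0 < C ∧
      ∀ γ : ℝ, 0 < γ →
      ∀ α : ℝ, (∀ k : ℤ, k ≠ 0 → γ⁻¹ * |(k : ℝ)| ^ (-τ) ≤ distInt (k * α)) →
      ∀ N : ℕ, 1 ≤ N →
      ∀ c : ℤ → ℂ,
        ∃ d : ℤ → ℂ,
          (∀ x : ℝ,
              trig ((Finset.Icc (-(N : ℤ)) N).erase 0) d (x + α) -
                  trig ((Finset.Icc (-(N : ℤ)) N).erase 0) d x =
                trig ((Finset.Icc (-(N : ℤ)) N).erase 0) c x) ∧
          ∀ σ : ℕ, σ ≤ s → ∀ x : ℝ,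
            ‖iteratedDeriv σ (trig ((Finset.Icc (-(N : ℤ)) N).erase 0) d) x‖ ≤
              C * γ * (N : ℝ) ^ ((s : ℝ) + τ + 1) *
                ⨆ y : ℝ, ‖trig ((Finset.Icc (-(N : ℤ)) N).erase 0) c y‖ := by
  refine ⟨(2 * π) ^ s, by positivity, fun γ hγ α hα N hN c => ?_⟩
  set S := (Icc (-(N : ℤ)) N).erase 0
  set M := ⨆ y : ℝ, ‖trig S c y‖
  have hM (x : ℝ) : ‖trig S c x‖ ≤ M := le_ciSup (bddAbove_range_norm_trig S c) x
  have hM0 : 0 ≤ M := (norm_nonneg _).trans (hM 0)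
  obtain ⟨d, hd, hdB⟩ := Diophantine.exists_trig_add_sub_trig_eq hα hγ hτ.le (by simp)
    (fun k => abs_le_of_mem_Icc_neg_erase_zero) hM
  refine ⟨d, hd, fun σ hσ x => ?_⟩
  have hN1 : (1 : ℝ) ≤ N := by exact_mod_cast hN
  have h2π : 1 ≤ 2 * π := by linarith [pi_gt_three]
  calc ‖iteratedDeriv σ (trig S d) x‖
      ≤ #S * ((2 * π * N) ^ σ * (γ * N ^ τ * M / 4)) :=
        norm_iteratedDeriv_trig_le S d (fun k => abs_le_of_mem_Icc_neg_erase_zero) hdB σ x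
    _ ≤ 2 * N * ((2 * π) ^ s * N ^ s * (γ * N ^ τ * M / 4)) := by
        rw [card_Icc_neg_erase_zero, mul_pow]
        push_cast
        gcongr
    _ = (2 * π) ^ s * γ * (N ^ s * N ^ τ * N) * M / 2 := by ring
    _ ≤ (2 * π) ^ s * γ * N ^ ((s : ℝ) + τ + 1) * M := by
        rw [rpow_add (by positivity), rpow_add (by positivity), rpow_one, rpow_natCast]
        exact half_le_self (by positivity)
end

section
/- Let a, α, x, t₀ ∈ ℝ, c ∈ ℂ, and k ∈ ℤ. Set B(x) = diag(e^{−iπkx}, e^{iπkx}), A = diag(e^{2πia}, e^{−2πia}), and let F(x) be the 2×2 matrix [[2πi t₀, c e^{2πikx}], [−conj(c) e^{−2πikx}, −2πi t₀]] ∈ su(2). Then B(x+α) · A · exp(F(x)) · B(x)⁻¹ = diag(e^{2πi(a − kα/2)}, e^{−2πi(a − kα/2)}) · exp([[2πi t₀, c], [−conj(c), −2πi t₀]]), where exp denotes the matrix exponential. In particular, the left-hand side is a constant (x-independent) element of SU(2). -/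
open Matrix

/-!
Write `E θ = diag(e^θ, e^{-θ})`, so that `θ ↦ E θ` is a homomorphism from `(ℂ, +)`, and
conjugating by `E θ` multiplies the off-diagonal entries by `e^{±2θ}`. Hence
`F(x) = E(iπkx) F₀ E(iπkx)⁻¹` with `F₀ = F(0)`, the matrix exponential commutes with this
conjugation, and the left-hand side collapses to `E(-iπk(x+α)) A E(iπkx) exp F₀`, whose
diagonal factor is `E(2πia - iπkα)`.
-/

namespace Matrix

noncomputable def diagExp (θ : ℂ) : Matrix (Fin 2) (Fin 2) ℂ :=
  !![Complex.exp θ, 0; 0, Complex.exp (-θ)]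

theorem diagExp_neg_eq (θ : ℂ) :
    diagExp (-θ) = !![Complex.exp (-θ), 0; 0, Complex.exp θ] := by
  rw [diagExp, neg_neg]

theorem diagExp_zero : diagExp 0 = 1 := by
  simp [diagExp, one_fin_two]

theorem diagExp_add (θ φ : ℂ) : diagExp (θ + φ) = diagExp θ * diagExp φ := by
  simp only [diagExp, mul_fin_two, mul_zero, zero_mul, add_zero, zero_add, neg_add,
    Complex.exp_add]

theorem diagExp_mul_diagExp_neg (θ : ℂ) : diagExp θ * diagExp (-θ) = 1 := by
  rw [← diagExp_add, add_neg_cancel, diagExp_zero]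

theorem inv_diagExp (θ : ℂ) : (diagExp θ)⁻¹ = diagExp (-θ) :=
  inv_eq_right_inv (diagExp_mul_diagExp_neg θ)

theorem isUnit_diagExp (θ : ℂ) : IsUnit (diagExp θ) :=
  .of_mul_eq_one _ (diagExp_mul_diagExp_neg θ)

theorem diagExp_mul_mul_diagExp_neg (θ p q r s : ℂ) :
    diagExp θ * !![p, q; r, s] * diagExp (-θ) =
      !![p, q * Complex.exp (2 * θ); r * Complex.exp (-(2 * θ)), s] := by
  have hconj (u v m : ℂ) : Complex.exp u * m * Complex.exp v = m * Complex.exp (u + v) := by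
    rw [mul_right_comm, ← Complex.exp_add, mul_comm]
  simp only [diagExp, mul_fin_two, mul_zero, zero_mul, add_zero, zero_add, neg_neg, hconj,
    add_neg_cancel, neg_add_cancel, Complex.exp_zero, mul_one, two_mul, neg_add]

end Matrix

/-- Reduction of a resonant mode: conjugating the cocycle
`x ↦ A · exp(F(x))`, with `A = diag(e^{2πia}, e^{−2πia})` and perturbation supported on the
single resonant frequency `k`, by `B(x) = diag(e^{−iπkx}, e^{iπkx})` yields the constant
`diag(e^{2πi(a−kα/2)}, e^{−2πi(a−kα/2)}) · exp([[2πi t₀, c], [−conj(c), −2πi t₀]])`. -/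
theorem stmt13 (a α x t₀ : ℝ) (c : ℂ) (k : ℤ) :
    (!![Complex.exp (-(Real.pi * Complex.I * k * (x + α))), 0;
        0, Complex.exp (Real.pi * Complex.I * k * (x + α))]) *
        (!![Complex.exp (2 * Real.pi * Complex.I * a), 0;
            0, Complex.exp (-(2 * Real.pi * Complex.I * a))]) *
        NormedSpace.exp
          (!![2 * Real.pi * Complex.I * t₀,
                c * Complex.exp (2 * Real.pi * Complex.I * k * x);
              -(starRingEnd ℂ c) * Complex.exp (-(2 * Real.pi * Complex.I * k * x)),
                -(2 * Real.pi * Complex.I * t₀)]) *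
        (!![Complex.exp (-(Real.pi * Complex.I * k * x)), 0;
            0, Complex.exp (Real.pi * Complex.I * k * x)])⁻¹ =
      (!![Complex.exp (2 * Real.pi * Complex.I * (a - k * α / 2)), 0;
          0, Complex.exp (-(2 * Real.pi * Complex.I * (a - k * α / 2)))]) *
        NormedSpace.exp
          (!![2 * Real.pi * Complex.I * t₀, c;
              -(starRingEnd ℂ c), -(2 * Real.pi * Complex.I * t₀)]) := by
  have hF : !![2 * Real.pi * Complex.I * t₀, c * Complex.exp (2 * Real.pi * Complex.I * k * x);
        -(starRingEnd ℂ c) * Complex.exp (-(2 * Real.pi * Complex.I * k * x)),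
        -(2 * Real.pi * Complex.I * t₀)] =
      diagExp (Real.pi * Complex.I * k * x) *
        !![2 * Real.pi * Complex.I * t₀, c; -(starRingEnd ℂ c), -(2 * Real.pi * Complex.I * t₀)] *
        (diagExp (Real.pi * Complex.I * k * x))⁻¹ := by
    rw [inv_diagExp, diagExp_mul_mul_diagExp_neg]
    simp only [mul_assoc]
  rw [hF, exp_conj _ _ (isUnit_diagExp _), ← diagExp_neg_eq, ← diagExp_neg_eq, ← diagExp.eq_1,
    ← diagExp.eq_1, inv_diagExp, inv_diagExp, neg_neg]
  simp only [mul_assoc]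
  rw [← diagExp_add, neg_add_cancel, diagExp_zero, mul_one]
  simp only [← mul_assoc, ← diagExp_add]
  congr 2
  ring
end
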